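/- arXiv:1909.06941 — 3 statements merged into one kernel-verified Lean document; each statement's English description precedes it below -/
import Mathlib

section
/- For every integer n ≥ 1 and every complex number s, the n-th derivative of the function t ↦ (-log(1-t))^s on (0,1) equals (1-t)^{-n} · Σ_{i=1}^{n} [n choose i]_Stirling1 · (s)_i · (-log(1-t))^{s-i}, where [n brack i] denotes the unsigned Stirling number of the first kind and (s)_i = s(s-1)⋯(s-i+1) is the falling factorial. -/
/-!
Write `u = (1 - t)⁻¹` and `L = -log (1 - t)`. Then `u' = u²` and `L' = u`, so the term
`(s)_i L^(s-i)` has derivative `u (s)_{i+1} L^(s-i-1)`. Differentiating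
`uⁿ ∑ᵢ [n, i] (s)_i L^(s-i)` therefore gives `uⁿ⁺¹ ∑ᵢ (n [n, i] + [n, i-1]) (s)_i L^(s-i)`,
and the coefficient is `[n+1, i]` by the Stirling recurrence.
-/

open Finset

/-- Unsigned Stirling numbers of the first kind. -/
def stir : ℕ → ℕ → ℕ
  | 0, 0 => 1
  | 0, _ + 1 => 0
  | _ + 1, 0 => 0
  | n + 1, i + 1 => stir n i + n * stir n (i + 1)

/-- Falling factorial `(s)_i = s (s-1) ⋯ (s-i+1)`. -/
def fall (i : ℕ) (s : ℂ) : ℂ := ∏ j ∈ Finset.range i, (s - j)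

lemma fall_succ (i : ℕ) (s : ℂ) : fall (i + 1) s = fall i s * (s - i) :=
  prod_range_succ _ _

lemma stir_eq_zero_of_lt {n i : ℕ} (h : n < i) : stir n i = 0 := by
  induction n generalizing i with
  | zero => obtain ⟨i, rfl⟩ := Nat.exists_eq_add_one_of_ne_zero (by omega : i ≠ 0); rfl
  | succ n ih =>
    obtain ⟨i, rfl⟩ := Nat.exists_eq_add_one_of_ne_zero (by omega : i ≠ 0)
    simp [stir, ih (by omega : n < i), ih (by omega : n < i + 1)]

lemma natCast_mul_stir_zero {R : Type*} [Semiring R] (n : ℕ) : (n : R) * stir n 0 = 0 := by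
  cases n <;> simp [stir]

theorem sum_range_stir_succ_mul {R : Type*} [CommSemiring R] (n : ℕ) (g : ℕ → R) :
    ∑ i ∈ range (n + 2), (stir (n + 1) i : R) * g i
      = ∑ i ∈ range (n + 1), (stir n i : R) * (n * g i + g (i + 1)) := by
  have hshift : ∑ i ∈ range (n + 1), (n * stir n (i + 1) : R) * g (i + 1)
      = ∑ i ∈ range (n + 1), (stir n i : R) * (n * g i) := by
    rw [sum_range_succ, sum_range_succ' _ n, stir_eq_zero_of_lt (by omega : n < n + 1),
      ← mul_assoc, mul_comm _ (n : R), natCast_mul_stir_zero]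
    simp only [Nat.cast_zero, mul_zero, zero_mul, add_zero]
    exact sum_congr rfl fun i _ => by ring
  simp only [sum_range_succ' _ (n + 1), stir, Nat.cast_add, Nat.cast_mul,
    Nat.cast_zero, zero_mul, add_zero, add_mul, mul_add, sum_add_distrib, hshift]
  exact add_comm _ _

theorem iteratedDerivWithin_eqOn_of_hasDerivAt {𝕜 F : Type*} [NontriviallyNormedField 𝕜]
    [NormedAddCommGroup F] [NormedSpace 𝕜 F] {U : Set 𝕜} (hU : IsOpen U) {f : 𝕜 → F}
    {g : ℕ → 𝕜 → F} (h0 : Set.EqOn f (g 0) U)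
    (hg : ∀ n, ∀ x ∈ U, HasDerivAt (g n) (g (n + 1) x) x) (n : ℕ) :
    Set.EqOn (iteratedDerivWithin n f U) (g n) U := by
  induction n with
  | zero => simpa using h0
  | succ n ih =>
    intro x hx
    rw [iteratedDerivWithin_succ, derivWithin_of_isOpen hU hx,
      (ih.eventuallyEq_of_mem (hU.mem_nhds hx)).deriv_eq, (hg n x hx).deriv]

theorem hasDerivAt_pow_mul_sum_stir {𝕜 𝔸 : Type*} [NontriviallyNormedField 𝕜] [NormedCommRing 𝔸]
    [NormedAlgebra 𝕜 𝔸] {u : 𝕜 → 𝔸} {G : ℕ → 𝕜 → 𝔸} {x : 𝕜} (hu : HasDerivAt u (u x ^ 2) x)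
    (hG : ∀ i, HasDerivAt (G i) (u x * G (i + 1) x) x) (n : ℕ) :
    HasDerivAt (fun y => u y ^ n * ∑ i ∈ range (n + 1), (stir n i : 𝔸) * G i y)
      (u x ^ (n + 1) * ∑ i ∈ range (n + 2), (stir (n + 1) i : 𝔸) * G i x) x := by
  have hsum := HasDerivAt.fun_sum fun i (_ : i ∈ range (n + 1)) => (hG i).const_mul (stir n i : 𝔸)
  convert (hu.fun_pow n).fun_mul hsum using 1
  have hpow : (n : 𝔸) * u x ^ (n - 1) * u x ^ 2 = n * u x ^ (n + 1) := by
    cases n with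
    | zero => simp
    | succ m => rw [Nat.add_sub_cancel]; ring
  rw [sum_range_stir_succ_mul, hpow, mul_sum, mul_sum, mul_sum, ← sum_add_distrib]
  exact sum_congr rfl fun i _ => by ring

lemma HasDerivAt.ofReal_cpow_const {f : ℝ → ℝ} {f' x : ℝ} (hf : HasDerivAt f f' x)
    (hx : 0 < f x) (c : ℂ) :
    HasDerivAt (fun y => (f y : ℂ) ^ c) (c * (f x : ℂ) ^ (c - 1) * f') x :=
  (Complex.hasStrictDerivAt_cpow_const (Complex.ofReal_mem_slitPlane.2 hx)).hasDerivAt.comp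
    (h₂ := fun z => z ^ c) x hf.ofReal_comp

lemma hasDerivAt_neg_log_one_sub {t : ℝ} (ht : t < 1) :
    HasDerivAt (fun t => -Real.log (1 - t)) (1 - t)⁻¹ t := by
  have h := ((hasDerivAt_id' t).const_sub 1).log (sub_ne_zero.2 ht.ne')
  refine h.fun_neg.congr_deriv ?_
  rw [neg_div, neg_neg, one_div]

lemma hasDerivAt_inv_one_sub {t : ℝ} (ht : t ≠ 1) :
    HasDerivAt (fun t : ℝ => ((1 - t : ℝ) : ℂ)⁻¹) (((1 - t : ℝ) : ℂ)⁻¹ ^ 2) t := by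
  have h := ((hasDerivAt_id' t).const_sub 1).ofReal_comp.fun_inv
    (Complex.ofReal_ne_zero.2 (sub_ne_zero.2 ht.symm))
  refine h.congr_deriv ?_
  rw [Complex.ofReal_neg, Complex.ofReal_one, neg_neg, one_div, inv_pow]

noncomputable def fallLogTerm (s : ℂ) (i : ℕ) (t : ℝ) : ℂ :=
  fall i s * ((-Real.log (1 - t) : ℝ) : ℂ) ^ (s - i)

lemma hasDerivAt_fallLogTerm (s : ℂ) (i : ℕ) {t : ℝ} (ht : t ∈ Set.Ioo (0 : ℝ) 1) :
    HasDerivAt (fallLogTerm s i) (((1 - t : ℝ) : ℂ)⁻¹ * fallLogTerm s (i + 1) t) t := by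
  have hlog : 0 < -Real.log (1 - t) :=
    neg_pos.2 (Real.log_neg (by linarith [ht.2]) (by linarith [ht.1]))
  refine (((hasDerivAt_neg_log_one_sub ht.2).ofReal_cpow_const hlog (s - i)).const_mul
    (fall i s)).congr_deriv ?_
  rw [fallLogTerm, fall_succ, show s - ((i + 1 : ℕ) : ℂ) = s - i - 1 by push_cast; ring,
    Complex.ofReal_inv]
  ring

theorem stmt_0 (n : ℕ) (hn : 1 ≤ n) (s : ℂ) (t : ℝ) (ht : t ∈ Set.Ioo (0:ℝ) 1) :
    iteratedDerivWithin n (fun t : ℝ => ((-Real.log (1 - t) : ℝ) : ℂ) ^ s)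
        (Set.Ioo (0:ℝ) 1) t
      = (((1 - t : ℝ) : ℂ))⁻¹ ^ n *
          ∑ i ∈ Finset.Icc 1 n,
            (stir n i : ℂ) * fall i s * ((-Real.log (1 - t) : ℝ) : ℂ) ^ (s - i) := by
  -- Summing over `range (n + 1)` rather than `Icc 1 n` makes the case `n = 0` the function itself.
  have hderiv := iteratedDerivWithin_eqOn_of_hasDerivAt isOpen_Ioo
    (g := fun n t =>
      ((1 - t : ℝ) : ℂ)⁻¹ ^ n * ∑ i ∈ range (n + 1), (stir n i : ℂ) * fallLogTerm s i t)
    (f := fun t : ℝ => ((-Real.log (1 - t) : ℝ) : ℂ) ^ s)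
    (fun t _ => by simp [stir, fallLogTerm, fall])
    (fun n t ht => hasDerivAt_pow_mul_sum_stir (hasDerivAt_inv_one_sub ht.2.ne)
      (fun i => hasDerivAt_fallLogTerm s i ht) n) n ht
  obtain ⟨m, rfl⟩ : ∃ m, n = m + 1 := ⟨n - 1, by omega⟩
  rw [hderiv]
  dsimp only
  rw [sum_range_eq_add_Ico _ (by omega), Ico_add_one_right_eq_Icc]
  simp [stir, fallLogTerm, mul_assoc]
end

section
/- Let A_{m,i}^k be the integers defined by A_{0,0}^k = δ_{k,0}, with A_{m,-1}^k = 0 and A_{m,i}^k = 0 for k < 0, and A_{m,i}^k = (k-1)(A_{m-1,i}^{k-1} + A_{m-1,i}^{k-2} + A_{m-1,i-1}^{k-2}) + (k+i-m-1)·A_{m-1,i-1}^{k-1} for m ≥ 1, 0 ≤ i ≤ m. Then for all m ≥ 1, m+1 ≤ k ≤ 2m, and 0 ≤ j ≤ m: Σ_{i=0}^{m} (-1)^i · C(m-i, j) · A_{m,i}^k ≥ 0. -/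
open Finset

/-! Write `S m j k` for `altSum m j k`. These sums satisfy a recurrence in `m` with nonnegative
coefficients,
`S (m+1) 0 k = S m 1 (k-1)` and
`S (m+1) (j+1) k = (k-1) (S m j (k-1) + S m j (k-2)) + (j+1) S m (j+1) (k-1) + (j+2) S m (j+2) (k-1)`
for `k ≥ 0`, obtained by expanding `A (m+1)`, shifting the index of the `A m (i-1)` terms, and using
Pascal's rule together with `n C(n,j) = j C(n,j) + (j+1) C(n,j+1)`. Induction on `m` then gives
`S m j k ≥ 0` for all `m`, `j` and `k`: at `k = 0` the factor `k - 1` is negative, but the sums it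
multiplies vanish. -/

/-- The three-parameter family of integers `A_{m,i}^k`. -/
def A : ℕ → ℤ → ℤ → ℤ
  | 0, i, k => if i = 0 ∧ k = 0 then 1 else 0
  | m + 1, i, k =>
      if i < 0 ∨ k < 0 then 0
      else (k - 1) * (A m i (k - 1) + A m i (k - 2) + A m (i - 1) (k - 2))
            + (k + i - (m + 1) - 1) * A m (i - 1) (k - 1)

lemma A_eq_zero_of_neg_k (m : ℕ) (i : ℤ) {k : ℤ} (hk : k < 0) : A m i k = 0 := by
  cases m with
  | zero => simp only [A, ite_eq_right_iff, and_imp]; omega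
  | succ m => simp [A, hk]

lemma A_eq_zero_of_neg_i (m : ℕ) {i : ℤ} (k : ℤ) (hi : i < 0) : A m i k = 0 := by
  cases m with
  | zero => simp only [A, ite_eq_right_iff, and_imp]; omega
  | succ m => simp [A, hi]

lemma A_eq_zero_of_lt (m : ℕ) {i : ℤ} (k : ℤ) (hi : (m : ℤ) < i) : A m i k = 0 := by
  induction m generalizing i k with
  | zero => simp only [A, ite_eq_right_iff, and_imp]; omega
  | succ m ih =>
    push_cast at hi
    simp [A, ih (i := i) _ (by omega), ih (i := i - 1) _ (by omega)]

lemma A_succ (m : ℕ) {i k : ℤ} (hi : 0 ≤ i) (hk : 0 ≤ k) :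
    A (m + 1) i k = (k - 1) * (A m i (k - 1) + A m i (k - 2))
      + ((k - 1) * A m (i - 1) (k - 2) + (k + i - m - 2) * A m (i - 1) (k - 1)) := by
  rw [A, if_neg (by omega)]
  ring

lemma self_mul_choose (n j : ℕ) :
    n * n.choose j = j * n.choose j + (j + 1) * n.choose (j + 1) := by
  rcases le_or_gt j n with hj | hj
  · rw [mul_comm (j + 1), Nat.choose_succ_right_eq, mul_comm _ (n - j), ← add_mul,
      Nat.add_sub_cancel' hj]
  · simp [Nat.choose_eq_zero_of_lt hj, Nat.choose_eq_zero_of_lt (hj.trans (Nat.lt_succ_self j))]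

def altSum (m j : ℕ) (k : ℤ) : ℤ :=
  ∑ i ∈ range (m + 1), (-1) ^ i * ((m - i).choose j : ℤ) * A m i k

lemma altSum_of_neg (m j : ℕ) {k : ℤ} (hk : k < 0) : altSum m j k = 0 :=
  sum_eq_zero fun i _ => by rw [A_eq_zero_of_neg_k _ _ hk, mul_zero]

lemma altSum_zero_nonneg (j : ℕ) (k : ℤ) : 0 ≤ altSum 0 j k := by
  simp only [altSum, zero_add, sum_range_one, pow_zero, one_mul, A]
  split_ifs <;> positivity

lemma altSum_succ_eq_sum (m j : ℕ) {k : ℤ} (hk : 0 ≤ k) :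
    altSum (m + 1) j k = ∑ i ∈ range (m + 1), (-1) ^ i *
      (((m + 1 - i).choose j : ℤ) * ((k - 1) * (A m i (k - 1) + A m i (k - 2)))
        - ((m - i).choose j : ℤ) * ((k - 1) * A m i (k - 2) + (k + i - m - 1) * A m i (k - 1))) := by
  have h_expand : altSum (m + 1) j k =
      (∑ i ∈ range (m + 2), (-1) ^ i * ((m + 1 - i).choose j : ℤ) *
        ((k - 1) * (A m i (k - 1) + A m i (k - 2))))
      + ∑ i ∈ range (m + 2), (-1) ^ i * ((m + 1 - i).choose j : ℤ) *
        ((k - 1) * A m (i - 1) (k - 2) + (k + i - m - 2) * A m (i - 1) (k - 1)) := by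
    rw [altSum, ← sum_add_distrib]
    refine sum_congr rfl fun i _ => ?_
    rw [A_succ m (Nat.cast_nonneg i) hk]
    ring
  have h_top : ∀ k', A m ((m + 1 : ℕ) : ℤ) k' = 0 := fun k' =>
    A_eq_zero_of_lt m k' (by push_cast; omega)
  have h_bottom : ∀ k', A m ((0 : ℕ) - 1 : ℤ) k' = 0 := fun k' =>
    A_eq_zero_of_neg_i m k' (by norm_num)
  rw [h_expand, sum_range_succ, h_top, h_top, sum_range_succ' (fun i : ℕ => (-1 : ℤ) ^ i *
      ((m + 1 - i).choose j : ℤ) *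
        ((k - 1) * A m (i - 1) (k - 2) + (k + i - m - 2) * A m (i - 1) (k - 1))),
    h_bottom, h_bottom]
  simp only [mul_zero, add_zero]
  rw [← sum_add_distrib]
  refine sum_congr rfl fun i _ => ?_
  rw [show m + 1 - (i + 1) = m - i by omega]
  push_cast
  ring_nf

lemma altSum_succ (m j : ℕ) {k : ℤ} (hk : 0 ≤ k) :
    altSum (m + 1) j k = (k - 1) * ∑ i ∈ range (m + 1), (-1) ^ i *
        (((m + 1 - i).choose j : ℤ) - (m - i).choose j) * (A m i (k - 1) + A m i (k - 2))
      + j * altSum m j (k - 1) + (j + 1) * altSum m (j + 1) (k - 1) := by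
  rw [altSum_succ_eq_sum m j hk, altSum, altSum, mul_sum, mul_sum, mul_sum, ← sum_add_distrib,
    ← sum_add_distrib]
  refine sum_congr rfl fun i hi => ?_
  have h_sub : ((m - i : ℕ) : ℤ) = m - i := Nat.cast_sub (by simpa using mem_range_succ_iff.mp hi)
  have h_choose := congrArg (fun n : ℕ => (n : ℤ)) (self_mul_choose (m - i) j)
  push_cast [h_sub] at h_choose
  linear_combination (-1) ^ i * A m i (k - 1) * h_choose

lemma altSum_succ_zero (m : ℕ) {k : ℤ} (hk : 0 ≤ k) :
    altSum (m + 1) 0 k = altSum m 1 (k - 1) := by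
  simp [altSum_succ m 0 hk]

lemma altSum_succ_succ (m j : ℕ) {k : ℤ} (hk : 0 ≤ k) :
    altSum (m + 1) (j + 1) k = (k - 1) * (altSum m j (k - 1) + altSum m j (k - 2))
      + (j + 1) * altSum m (j + 1) (k - 1) + (j + 2) * altSum m (j + 2) (k - 1) := by
  have h_pascal : ∑ i ∈ range (m + 1), (-1 : ℤ) ^ i *
      (((m + 1 - i).choose (j + 1) : ℤ) - (m - i).choose (j + 1)) * (A m i (k - 1) + A m i (k - 2))
      = altSum m j (k - 1) + altSum m j (k - 2) := by
    rw [altSum, altSum, ← sum_add_distrib]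
    refine sum_congr rfl fun i hi => ?_
    rw [show m + 1 - i = m - i + 1 by have := mem_range.mp hi; omega, Nat.choose_succ_succ']
    push_cast
    ring
  rw [altSum_succ m (j + 1) hk, h_pascal]
  push_cast
  ring

lemma altSum_nonneg (m j : ℕ) (k : ℤ) : 0 ≤ altSum m j k := by
  induction m generalizing j k with
  | zero => exact altSum_zero_nonneg j k
  | succ m ih =>
    rcases lt_or_ge k 0 with hk | hk
    · exact (altSum_of_neg _ _ hk).ge
    cases j with
    | zero => exact altSum_succ_zero m hk ▸ ih 1 (k - 1)
    | succ j =>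
      have h_first : 0 ≤ (k - 1) * (altSum m j (k - 1) + altSum m j (k - 2)) := by
        rcases hk.eq_or_lt with rfl | hk
        · simp [altSum_of_neg]
        · exact mul_nonneg (by omega) (add_nonneg (ih j _) (ih j _))
      rw [altSum_succ_succ m j hk]
      have := ih (j + 1) (k - 1)
      have := ih (j + 2) (k - 1)
      positivity

theorem stmt_7_general (m k j : ℕ) :
    0 ≤ ∑ i ∈ Finset.range (m + 1), (-1 : ℤ) ^ i * ((m - i).choose j : ℤ) * A m i k :=
  altSum_nonneg m j k

theorem stmt_7 (m k j : ℕ) (hm : 1 ≤ m) (hk1 : m + 1 ≤ k) (hk2 : k ≤ 2 * m)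
    (hj : j ≤ m) :
    0 ≤ ∑ i ∈ Finset.range (m + 1), (-1 : ℤ) ^ i * ((m - i).choose j : ℤ) * A m i k :=
  stmt_7_general m k j
end

section
/- Say a polynomial term f(k,M,N) = t^M(1-t)^N 'satisfies the positivity condition' if k, M, N ≥ 0 and k - M - N ≥ 0. Then the operator B₁+C₁ sending t^M(1-t)^N (at index k) to (k-M)·t^M(1-t)^N + M·t^M(1-t)^{N+1} + N·t^{M+2}(1-t)^{N-1} (at index k+1) maps any term satisfying the positivity condition to a nonnegative-coefficient combination of terms satisfying the positivity condition. -/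
open Polynomial

/-- The term `f(k, M, N) = t^M (1 - t)^N` (the index `k` only enters through the
positivity condition `k - M - N ≥ 0`). -/
noncomputable def fTerm (M N : ℕ) : Polynomial ℤ := X ^ M * (1 - X) ^ N

/-- The operator `B₁ + C₁` at index `k`:
`B₁` multiplies by `k` (passing from index `k` to `k+1`) and
`C₁(p) = -t² (d/dt p)`. Applied to a term `f(k,M,N) = t^M (1-t)^N` satisfying
the positivity condition `k, M, N ≥ 0` and `k - M - N ≥ 0`, it equals
`(k-M) f(k+1,M,N) + M f(k+1,M,N+1) + N f(k+1,M+2,N-1)`, a nonnegative-coefficient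
combination of terms each satisfying the positivity condition at index `k+1`
(when `N = 0` the last term has coefficient `0`). -/
theorem stmt_17 (k M N : ℕ) (hpos : M + N ≤ k) :
    (Polynomial.C (k : ℤ) * fTerm M N - X ^ 2 * Polynomial.derivative (fTerm M N)
        = Polynomial.C ((k : ℤ) - M) * fTerm M N
            + Polynomial.C (M : ℤ) * fTerm M (N + 1)
            + Polynomial.C (N : ℤ) * fTerm (M + 2) (N - 1))
      ∧ 0 ≤ (k : ℤ) - M
      ∧ M + N ≤ k + 1
      ∧ M + (N + 1) ≤ k + 1
      ∧ (N = 0 ∨ (M + 2) + (N - 1) ≤ k + 1) := by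
  refine ⟨?_, by omega, by omega, by omega, ?_⟩
  · rcases N with _ | n <;> rcases M with _ | m <;>
      simp [fTerm, derivative_pow, derivative_mul, map_ofNat] <;> push_cast <;> ring
  · rcases N with _ | n
    · exact Or.inl rfl
    · exact Or.inr (by omega)
end
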